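/- For every integer n ≥ 0, the Sierpiński triangle graph Ŝ_3^n has a minimum feedback vertex set A such that A contains exactly one of the three extreme vertices 0̂, 1̂, 2̂. -/

import Mathlib

open SimpleGraph

/-- The Sierpinski graph `S_p^n` on vertex set `P^n`: two distinct vertices are adjacent
iff they can be written as `s i j^(d-1)` and `s j i^(d-1)`. -/
def sierpinski (p n : Nat) : SimpleGraph (Fin n → Fin p) :=
  SimpleGraph.fromRel (fun u v =>
    ∃ t : Fin n, ∃ i j : Fin p, i ≠ j ∧
      (∀ k, k < t → u k = v k) ∧ u t = i ∧ v t = j ∧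
      (∀ k, t < k → u k = j ∧ v k = i))

/-- `X` is a feedback vertex set of `G` if deleting it leaves an acyclic graph. -/
def IsFeedbackVertexSet {V : Type*} (G : SimpleGraph V) (X : Set V) : Prop :=
  (G.induce Xᶜ).IsAcyclic

/-- The feedback vertex number: the minimum cardinality of a feedback vertex set. -/
noncomputable def feedbackNumber {V : Type*} (G : SimpleGraph V) : Nat :=
  sInf {k | ∃ X : Finset V, X.card = k ∧ IsFeedbackVertexSet G ↑X}

/-- The maximum number of vertices of an induced forest of `G`. -/
noncomputable def maxInducedForest {V : Type*} (G : SimpleGraph V) : Nat :=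
  sSup {k | ∃ Y : Finset V, Y.card = k ∧ (G.induce (↑Y : Set V)).IsAcyclic}

/-- The non-clique edges of `S_p^(n+1)`: edges `{s i j^l, s j i^l}` with `l ≥ 1`,
i.e. adjacency witnessed at a position `t` with `t < n`. -/
def nonCliqueRel (p n : Nat) (u v : Fin (n+1) → Fin p) : Prop :=
  ∃ t : Fin (n+1), (t : Nat) < n ∧ ∃ i j : Fin p, i ≠ j ∧
    (∀ k, k < t → u k = v k) ∧ u t = i ∧ v t = j ∧
    (∀ k, t < k → u k = j ∧ v k = i)

/-- The setoid identifying the two endpoints of every non-clique edge of `S_p^(n+1)`. -/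
def triSetoid (p n : Nat) : Setoid (Fin (n+1) → Fin p) :=
  Relation.EqvGen.setoid (nonCliqueRel p n)

/-- The generalized Sierpinski triangle graph: the contraction of all
non-clique edges of `S_p^(n+1)`. -/
def sierpinskiTriangle (p n : Nat) : SimpleGraph (Quotient (triSetoid p n)) where
  Adj x y := x ≠ y ∧ ∃ u v : Fin (n+1) → Fin p,
    Quotient.mk (triSetoid p n) u = x ∧ Quotient.mk (triSetoid p n) v = y ∧
    (sierpinski p (n+1)).Adj u v
  symm := by
    constructor
    rintro x y ⟨hxy, u, v, hu, hv, h⟩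
    exact ⟨hxy.symm, v, u, hv, hu, h.symm⟩
  loopless := by
    constructor
    rintro x ⟨hxx, -⟩
    exact hxx rfl

/-!
Lower bound: the `3^n` triangles `{s0, s1, s2}` (`s ∈ P^n`) of `Ŝ_3^n` are 3-cycles, so every
feedback vertex set meets all of them, while a vertex of `Ŝ_3^n` is the image of at most two
words and hence lies on at most two triangles. So a feedback vertex set has at least
`⌈3^n / 2⌉` vertices.

Upper bound, by induction on `n`: `Ŝ_3^(n+1)` is made of three copies of `Ŝ_3^n` which meet
pairwise in one vertex. Put into copy `0` a minimum feedback vertex set of `Ŝ_3^n` whose only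
extreme vertex is `0̂`, and into copies `1` and `2` its relabellings whose only extreme vertices
are `2̂` and `1̂`. The three sets agree at the shared vertices, the one shared by copies `1` and
`2` is removed (and counted twice), so the surviving forests are glued along cut vertices into
a forest, and the union has `3 ⌈3^n / 2⌉ - 1 = ⌈3^(n+1) / 2⌉` vertices, with `0̂` as its only
extreme vertex.
-/

namespace SimpleGraph

variable {V W : Type*} {G : SimpleGraph V} {H : SimpleGraph W}

noncomputable def Embedding.induceImage (e : G ↪g H) (T : Set V) :
    G.induce T ≃g H.induce (e '' T) :=
  { Equiv.Set.image e T e.injective with map_rel_iff' := e.map_rel_iff }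

theorem isAcyclic_induce_iff {S : Set V} :
    (G.induce S).IsAcyclic ↔ ∀ a (c : G.Walk a a), c.IsCycle → ∃ x ∈ c.support, x ∉ S := by
  have hinj {a : S} {c : (G.induce S).Walk a a} :=
    Walk.isCycle_map_iff_of_injective (p := c) (f := (Embedding.induce (G := G) S).toHom)
      (Embedding.induce (G := G) S).injective
  constructor
  · intro h a c hc
    by_contra! hS
    exact h (c.induce S hS) (hinj.1 (by rwa [Walk.map_induce]))
  · intro h a c hc
    obtain ⟨x, hx, hxS⟩ := h _ _ (hinj.2 hc)
    rw [Walk.support_map] at hx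
    obtain ⟨y, -, rfl⟩ := List.mem_map.1 hx
    exact hxS y.2

theorem Walk.exists_mem_inter_of_mem_of_not_mem {A B : Set V}
    (hnadj : ∀ a ∈ A \ B, ∀ b ∈ B \ A, ¬G.Adj a b) {x y : V} (w : G.Walk x y)
    (hw : ∀ z ∈ w.support, z ∈ A ∪ B) (hx : x ∈ A) (hy : y ∉ A) :
    ∃ z ∈ w.support, z ∈ A ∩ B := by
  induction w with
  | nil => exact absurd hx hy
  | @cons x c y h p ih =>
    by_cases hc : c ∈ A
    · obtain ⟨z, hz, hzAB⟩ := ih (fun z hz => hw z (by simp [hz])) hc hy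
      exact ⟨z, by simp [hz], hzAB⟩
    · refine ⟨x, (p.cons h).start_mem_support, hx, ?_⟩
      by_contra hxB
      exact hnadj x ⟨hx, hxB⟩ c ⟨(hw c (by simp)).resolve_left hc, hc⟩ h

theorem isAcyclic_induce_union {A B : Set V} {v : V} (hAB : A ∩ B ⊆ {v})
    (hnadj : ∀ a ∈ A \ B, ∀ b ∈ B \ A, ¬G.Adj a b)
    (hA : (G.induce A).IsAcyclic) (hB : (G.induce B).IsAcyclic) :
    (G.induce (A ∪ B)).IsAcyclic := by
  classical
  rw [isAcyclic_induce_iff] at hA hB ⊢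
  intro u c hc
  by_contra! hcAB
  obtain ⟨a, ha, haB⟩ := hB u c hc
  obtain ⟨b, hb, hbA⟩ := hA u c hc
  have haA : a ∈ A := (hcAB a ha).resolve_right haB
  have hbB : b ∈ B := (hcAB b hb).resolve_left hbA
  -- Rotate `c` to start at `a ∉ B` and split it at `b ∉ A`: both halves pass through `v`,
  -- which would then occur twice on the cycle.
  set c' := c.rotate a ha
  have hsupp : ∀ z ∈ c'.support, z ∈ A ∪ B :=
    fun z hz => hcAB z ((c.mem_support_rotate_iff a ha).1 hz)
  have hb' : b ∈ c'.support := (c.mem_support_rotate_iff a ha).2 hb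
  obtain ⟨z, hz, hzA, hzB⟩ := (c'.takeUntil b hb').exists_mem_inter_of_mem_of_not_mem hnadj
    (fun z hz => hsupp z (c'.support_takeUntil_subset_support hb' hz)) haA hbA
  obtain ⟨z', hz', hz'B, hz'A⟩ := (c'.dropUntil b hb').exists_mem_inter_of_mem_of_not_mem
    (fun b hb a ha h => hnadj a ha b hb h.symm)
    (fun z hz => Set.union_comm A B ▸ hsupp z (c'.support_dropUntil_subset_support hb' hz))
    hbB haB
  obtain rfl : z = v := hAB ⟨hzA, hzB⟩
  obtain rfl : z' = z := hAB ⟨hz'A, hz'B⟩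
  have hnodup : c'.support.tail.Nodup := (hc.rotate ha).support_nodup
  rw [← c'.take_spec hb', Walk.tail_support_append] at hnodup
  have hz_tail := ((Walk.mem_support_iff _).1 hz).resolve_left (by rintro rfl; exact haB hzB)
  have hz'_tail := ((Walk.mem_support_iff _).1 hz').resolve_left (by rintro rfl; exact hbA hzA)
  exact List.disjoint_of_nodup_append hnodup hz_tail hz'_tail

end SimpleGraph

section FeedbackVertexSet

variable {V W : Type*} {G : SimpleGraph V} {H : SimpleGraph W}

theorem IsFeedbackVertexSet.image_iso (e : G ≃g H) {X : Set V}
    (hX : IsFeedbackVertexSet G X) : IsFeedbackVertexSet H (e '' X) := by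
  rw [IsFeedbackVertexSet, ← Set.image_compl_eq e.bijective]
  exact (e.toEmbedding.induceImage Xᶜ).isAcyclic_iff.1 hX

theorem IsFeedbackVertexSet.card_eq_feedbackNumber {X : Finset V}
    (hX : IsFeedbackVertexSet G ↑X)
    (hmin : ∀ Y : Finset V, IsFeedbackVertexSet G ↑Y → X.card ≤ Y.card) :
    X.card = feedbackNumber G :=
  le_antisymm (le_csInf ⟨_, X, rfl, hX⟩ fun _ ⟨Y, hY, hYfvs⟩ => hY ▸ hmin Y hYfvs)
    (Nat.sInf_le ⟨X, rfl, hX⟩)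

end FeedbackVertexSet

namespace SierpinskiTriangle

variable {p q n m : ℕ}

abbrev Vertex (p n : ℕ) : Type := Quotient (triSetoid p n)

abbrev vertex (u : Fin (n + 1) → Fin p) : Vertex p n := Quotient.mk _ u

/-- The extreme vertex `k̂` of `Ŝ_p^n`, the image of the word `k^(n+1)`. -/
def extreme (n : ℕ) (k : Fin p) : Vertex p n := vertex fun _ => k

section Words

variable {u v w : Fin (n + 1) → Fin p}

theorem nonCliqueRel_symm (h : nonCliqueRel p n u v) : nonCliqueRel p n v u := by
  obtain ⟨t, ht, i, j, hij, hlt, hut, hvt, hgt⟩ := h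
  exact ⟨t, ht, j, i, hij.symm, fun k hk => (hlt k hk).symm, hvt, hut,
    fun k hk => (hgt k hk).symm⟩

theorem nonCliqueRel_unique (hv : nonCliqueRel p n u v) (hw : nonCliqueRel p n u w) :
    v = w := by
  obtain ⟨t, ht, i, j, hij, hlt, hut, hvt, hgt⟩ := hv
  obtain ⟨t', ht', i', j', hij', hlt', hut', hvt', hgt'⟩ := hw
  have hlast : j = j' := (hgt _ (Fin.lt_def.2 ht : t < Fin.last n)).1.symm.trans
    (hgt' _ (Fin.lt_def.2 ht' : t' < Fin.last n)).1
  obtain rfl : t = t' := by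
    by_contra hne
    rcases lt_or_gt_of_ne hne with h | h
    · exact hij' (hut'.symm.trans ((hgt t' h).1.trans hlast))
    · exact hij (hut.symm.trans ((hgt' t h).1.trans hlast.symm))
  funext k
  rcases lt_trichotomy k t with h | rfl | h
  · rw [← hlt k h, hlt' k h]
  · rw [hvt, hvt', hlast]
  · rw [(hgt k h).2, (hgt' k h).2, ← hut, hut']

theorem vertex_eq_vertex_iff : vertex u = vertex v ↔ u = v ∨ nonCliqueRel p n u v := by
  refine ⟨fun h => ?_, ?_⟩
  · have h' : Relation.EqvGen (nonCliqueRel p n) u v := Quotient.exact h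
    clear h
    induction h' with
    | rel x y h => exact Or.inr h
    | refl x => exact Or.inl rfl
    | symm x y _ ih => exact ih.elim (Or.inl ·.symm) (Or.inr <| nonCliqueRel_symm ·)
    | trans x y z _ _ ih₁ ih₂ =>
      rcases ih₁ with rfl | h₁
      · exact ih₂
      rcases ih₂ with rfl | h₂
      · exact Or.inr h₁
      · exact Or.inl (nonCliqueRel_unique (nonCliqueRel_symm h₁) h₂)
  · rintro (rfl | h)
    · rfl
    · exact Quotient.sound (Relation.EqvGen.rel _ _ h)

theorem exists_pair_of_vertex_eq (x : Vertex p n) :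
    ∃ w w' : Fin (n + 1) → Fin p, ∀ u, vertex u = x → u = w ∨ u = w' := by
  induction x using Quotient.inductionOn with | h w => ?_
  by_cases hw : ∃ w', nonCliqueRel p n w w'
  · obtain ⟨w', hw'⟩ := hw
    exact ⟨w, w', fun u hu => (vertex_eq_vertex_iff.1 hu).imp_right fun h =>
      nonCliqueRel_unique (nonCliqueRel_symm h) hw'⟩
  · exact ⟨w, w, fun u hu => Or.inl <| (vertex_eq_vertex_iff.1 hu).resolve_right fun h =>
      hw ⟨u, nonCliqueRel_symm h⟩⟩

theorem vertex_eq_extreme_iff {k : Fin p} : vertex u = extreme n k ↔ u = fun _ => k := by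
  refine vertex_eq_vertex_iff.trans (or_iff_left ?_)
  rintro ⟨t, ht, i, j, hij, -, -, hvt, hgt⟩
  exact hij ((hgt _ (Fin.lt_def.2 ht : t < Fin.last n)).2.symm.trans hvt)

theorem extreme_injective : Function.Injective (extreme (p := p) n) :=
  fun _ _ h => congrFun (vertex_eq_extreme_iff.1 h) 0

theorem exists_extreme_eq (x : Vertex p 0) : ∃ k, extreme 0 k = x := by
  induction x using Quotient.inductionOn with | h u => ?_
  exact ⟨u 0, congrArg vertex (funext fun k => by rw [Fin.fin_one_eq_zero k])⟩

theorem inter_range_extreme_eq {X : Finset (Vertex p n)} {k : Fin p}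
    (hX : ∀ j, extreme n j ∈ X ↔ j = k) :
    ↑X ∩ Set.range (extreme n) = {extreme n k} := by
  ext x
  simp only [Set.mem_inter_iff, Finset.mem_coe, Set.mem_range, Set.mem_singleton_iff]
  constructor
  · rintro ⟨hx, j, rfl⟩
    rw [(hX j).1 hx]
  · rintro rfl
    exact ⟨(hX k).2 rfl, k, rfl⟩

end Words

section Adjacency

variable {s : Fin n → Fin p} {a b : Fin p}

theorem vertex_snoc_ne (hab : a ≠ b) :
    vertex (Fin.snoc s a : Fin (n + 1) → Fin p) ≠ vertex (Fin.snoc s b) := by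
  intro h
  rcases vertex_eq_vertex_iff.1 h with h | ⟨t, ht, i, j, hij, -, hut, hvt, -⟩
  · exact hab (by simpa using congrFun h (Fin.last n))
  · obtain ⟨t, rfl⟩ := Fin.exists_castSucc_eq.2 (Fin.lt_def.2 ht : t < Fin.last n).ne
    rw [Fin.snoc_castSucc] at hut hvt
    exact hij (hut.symm.trans hvt)

theorem vertex_eq_or_exists_snoc {u v : Fin (n + 1) → Fin p} {t : Fin (n + 1)} {i j : Fin p}
    (hij : i ≠ j) (hlt : ∀ k, k < t → u k = v k) (hut : u t = i) (hvt : v t = j)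
    (hgt : ∀ k, t < k → u k = j ∧ v k = i) :
    vertex u = vertex v ∨ ∃ (s : Fin n → Fin p) (a b : Fin p), a ≠ b ∧
      u = Fin.snoc s a ∧ v = Fin.snoc s b := by
  by_cases ht : (t : ℕ) < n
  · exact Or.inl (vertex_eq_vertex_iff.2 (Or.inr ⟨t, ht, i, j, hij, hlt, hut, hvt, hgt⟩))
  obtain rfl : t = Fin.last n := Fin.ext (by simp; omega)
  have hinit : Fin.init v = Fin.init u := funext fun k => (hlt _ (Fin.castSucc_lt_last k)).symm
  refine Or.inr ⟨Fin.init u, i, j, hij, ?_, ?_⟩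
  · rw [← hut, Fin.snoc_init_self]
  · rw [← hvt, ← hinit, Fin.snoc_init_self]

theorem sierpinski_adj_cases {u v : Fin (n + 1) → Fin p} (h : (sierpinski p (n + 1)).Adj u v) :
    vertex u = vertex v ∨ ∃ (s : Fin n → Fin p) (a b : Fin p), a ≠ b ∧
      u = Fin.snoc s a ∧ v = Fin.snoc s b := by
  rw [sierpinski, SimpleGraph.fromRel_adj] at h
  rcases h with ⟨-, ⟨t, i, j, hij, hlt, hut, hvt, hgt⟩ | ⟨t, i, j, hij, hlt, hut, hvt, hgt⟩⟩
  · exact vertex_eq_or_exists_snoc hij hlt hut hvt hgt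
  · rcases vertex_eq_or_exists_snoc hij hlt hut hvt hgt with h | ⟨s, a, b, hab, rfl, rfl⟩
    · exact Or.inl h.symm
    · exact Or.inr ⟨s, b, a, hab.symm, rfl, rfl⟩

theorem sierpinski_adj_snoc (hab : a ≠ b) :
    (sierpinski p (n + 1)).Adj (Fin.snoc s a) (Fin.snoc s b) := by
  rw [sierpinski, SimpleGraph.fromRel_adj]
  refine ⟨fun h => vertex_snoc_ne hab (congrArg vertex h), Or.inl ⟨Fin.last n, a, b, hab, ?_,
    by simp, by simp, fun k hk => absurd hk (Fin.le_last k).not_gt⟩⟩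
  intro k hk
  obtain ⟨k, rfl⟩ := Fin.exists_castSucc_eq.2 hk.ne
  simp

theorem adj_iff {x y : Vertex p n} :
    (sierpinskiTriangle p n).Adj x y ↔ ∃ (s : Fin n → Fin p) (a b : Fin p), a ≠ b ∧
      x = vertex (Fin.snoc s a) ∧ y = vertex (Fin.snoc s b) := by
  constructor
  · rintro ⟨hne, u, v, rfl, rfl, huv⟩
    rcases sierpinski_adj_cases huv with h | ⟨s, a, b, hab, rfl, rfl⟩
    · exact absurd h hne
    · exact ⟨s, a, b, hab, rfl, rfl⟩
  · rintro ⟨s, a, b, hab, rfl, rfl⟩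
    exact ⟨vertex_snoc_ne hab, _, _, rfl, rfl, sierpinski_adj_snoc hab⟩

end Adjacency

def Vertex.map (f : (Fin (n + 1) → Fin p) → (Fin (m + 1) → Fin q))
    (hf : ∀ u v, nonCliqueRel p n u v → nonCliqueRel q m (f u) (f v)) :
    Vertex p n → Vertex q m :=
  Quotient.lift (fun u => vertex (f u)) fun u v h => by
    rcases vertex_eq_vertex_iff.1 (Quotient.sound h) with rfl | h
    · rfl
    · exact vertex_eq_vertex_iff.2 (Or.inr (hf u v h))

section Copies

theorem nonCliqueRel_cons_iff {i : Fin p} {u v : Fin (n + 1) → Fin p} :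
    nonCliqueRel p (n + 1) (Fin.cons i u) (Fin.cons i v) ↔ nonCliqueRel p n u v := by
  constructor
  · rintro ⟨t, ht, a, b, hab, hlt, hut, hvt, hgt⟩
    cases t using Fin.cases with
    | zero => exact absurd (hut.symm.trans hvt) hab
    | succ t =>
      refine ⟨t, by simpa using ht, a, b, hab, fun k hk => ?_, by simpa using hut,
        by simpa using hvt, fun k hk => ?_⟩
      · simpa using hlt k.succ (Fin.succ_lt_succ_iff.2 hk)
      · simpa using hgt k.succ (Fin.succ_lt_succ_iff.2 hk)
  · rintro ⟨t, ht, a, b, hab, hlt, hut, hvt, hgt⟩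
    refine ⟨t.succ, by simpa using ht, a, b, hab, fun k hk => ?_, by simpa using hut,
      by simpa using hvt, fun k hk => ?_⟩
    · cases k using Fin.cases with
      | zero => rfl
      | succ k => simpa using hlt k (Fin.succ_lt_succ_iff.1 hk)
    · cases k using Fin.cases with
      | zero => exact absurd hk (Fin.not_lt_zero _)
      | succ k => simpa using hgt k (Fin.succ_lt_succ_iff.1 hk)

def copy (i : Fin p) : Vertex p n → Vertex p (n + 1) :=
  Vertex.map (fun u => (Fin.cons i u : Fin (n + 2) → Fin p)) fun _ _ => nonCliqueRel_cons_iff.2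

@[simp]
theorem copy_vertex (i : Fin p) (u : Fin (n + 1) → Fin p) :
    copy i (vertex u) = vertex (Fin.cons i u) := rfl

theorem copy_injective (i : Fin p) : Function.Injective (copy (n := n) i) := by
  rintro ⟨u⟩ ⟨v⟩ h
  rcases vertex_eq_vertex_iff.1 h with h | h
  · exact congrArg vertex (Fin.cons_right_injective (α := fun _ => Fin p) i h)
  · exact vertex_eq_vertex_iff.2 (Or.inr (nonCliqueRel_cons_iff.1 h))

theorem copy_extreme (k : Fin p) : copy k (extreme n k) = extreme (n + 1) k :=
  congrArg vertex (Fin.cons_self_tail (fun _ => k : Fin (n + 2) → Fin p))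

theorem copy_comm {i j : Fin p} (hij : i ≠ j) :
    copy i (extreme n j) = copy j (extreme n i) := by
  refine vertex_eq_vertex_iff.2 (Or.inr ⟨0, n.succ_pos, i, j, hij,
    fun k hk => absurd hk (Fin.not_lt_zero k), rfl, rfl, fun k hk => ?_⟩)
  cases k using Fin.cases with
  | zero => exact absurd hk (lt_irrefl 0)
  | succ k => exact ⟨rfl, rfl⟩

theorem copy_eq_copy {i j : Fin p} (hij : i ≠ j) {x y : Vertex p n}
    (h : copy i x = copy j y) : x = extreme n j ∧ y = extreme n i := by
  induction x using Quotient.inductionOn with | h u => ?_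
  induction y using Quotient.inductionOn with | h v => ?_
  rcases vertex_eq_vertex_iff.1 h with h | ⟨t, -, a, b, hab, hlt, hut, hvt, hgt⟩
  · exact absurd (by simpa using congrFun h 0) hij
  obtain rfl : t = 0 := by
    by_contra ht
    exact hij (by simpa using hlt 0 (Fin.pos_of_ne_zero ht))
  simp only [Fin.cons_zero] at hut hvt
  subst hut hvt
  exact ⟨congrArg vertex (funext fun k => by simpa using (hgt k.succ k.succ_pos).1),
    congrArg vertex (funext fun k => by simpa using (hgt k.succ k.succ_pos).2)⟩

theorem exists_copy_eq (x : Vertex p (n + 1)) : ∃ i y, copy i y = x := by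
  induction x using Quotient.inductionOn with | h w => ?_
  exact ⟨w 0, vertex (Fin.tail w), congrArg vertex (Fin.cons_self_tail w)⟩

theorem exists_copy_of_adj {x y : Vertex p (n + 1)}
    (h : (sierpinskiTriangle p (n + 1)).Adj x y) :
    ∃ i x' y', (sierpinskiTriangle p n).Adj x' y' ∧ copy i x' = x ∧ copy i y' = y := by
  obtain ⟨S, a, b, hab, rfl, rfl⟩ := adj_iff.1 h
  refine ⟨S 0, _, _, adj_iff.2 ⟨Fin.tail S, a, b, hab, rfl, rfl⟩, ?_, ?_⟩ <;>
    rw [copy_vertex, Fin.cons_snoc_eq_snoc_cons, Fin.cons_self_tail]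

theorem copy_adj_copy {i : Fin p} {x y : Vertex p n} :
    (sierpinskiTriangle p (n + 1)).Adj (copy i x) (copy i y) ↔
      (sierpinskiTriangle p n).Adj x y := by
  constructor
  · intro h
    obtain ⟨j, x', y', hadj, hx, hy⟩ := exists_copy_of_adj h
    by_cases hji : j = i
    · subst hji
      rwa [← copy_injective j hx, ← copy_injective j hy]
    · have hxy : x = y := (copy_eq_copy hji hx).2.trans (copy_eq_copy hji hy).2.symm
      exact absurd (congrArg (copy i) hxy) h.ne
  · intro h
    obtain ⟨s, a, b, hab, rfl, rfl⟩ := adj_iff.1 h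
    exact adj_iff.2 ⟨Fin.cons i s, a, b, hab, by simp [Fin.cons_snoc_eq_snoc_cons],
      by simp [Fin.cons_snoc_eq_snoc_cons]⟩

def copyEmbedding (i : Fin p) : sierpinskiTriangle p n ↪g sierpinskiTriangle p (n + 1) where
  toFun := copy i
  inj' := copy_injective i
  map_rel_iff' := copy_adj_copy

end Copies

section Relabel

theorem nonCliqueRel_comp {f : Fin p → Fin q} (hf : Function.Injective f)
    {u v : Fin (n + 1) → Fin p} (h : nonCliqueRel p n u v) :
    nonCliqueRel q n (f ∘ u) (f ∘ v) := by
  obtain ⟨t, ht, i, j, hij, hlt, hut, hvt, hgt⟩ := h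
  exact ⟨t, ht, f i, f j, hf.ne hij, fun k hk => congrArg f (hlt k hk), congrArg f hut,
    congrArg f hvt, fun k hk => ⟨congrArg f (hgt k hk).1, congrArg f (hgt k hk).2⟩⟩

def relabel (σ : Equiv.Perm (Fin p)) : Vertex p n → Vertex p n :=
  Vertex.map (σ ∘ ·) fun _ _ => nonCliqueRel_comp σ.injective

theorem relabel_inv_relabel (σ : Equiv.Perm (Fin p)) (x : Vertex p n) :
    relabel σ⁻¹ (relabel σ x) = x := by
  induction x using Quotient.inductionOn with | h u => ?_
  exact congrArg vertex (funext fun k => σ.symm_apply_apply (u k))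

theorem relabel_adj (σ : Equiv.Perm (Fin p)) {x y : Vertex p n}
    (h : (sierpinskiTriangle p n).Adj x y) :
    (sierpinskiTriangle p n).Adj (relabel σ x) (relabel σ y) := by
  obtain ⟨s, a, b, hab, rfl, rfl⟩ := adj_iff.1 h
  exact adj_iff.2 ⟨σ ∘ s, σ a, σ b, σ.injective.ne hab,
    congrArg vertex (Fin.comp_snoc _ _ _), congrArg vertex (Fin.comp_snoc _ _ _)⟩

def relabelIso (σ : Equiv.Perm (Fin p)) : sierpinskiTriangle p n ≃g sierpinskiTriangle p n where
  toFun := relabel σ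
  invFun := relabel σ⁻¹
  left_inv := relabel_inv_relabel σ
  right_inv x := by simpa using relabel_inv_relabel σ⁻¹ x
  map_rel_iff' := ⟨fun h => by simpa [relabel_inv_relabel] using relabel_adj σ⁻¹ h,
    relabel_adj σ⟩

end Relabel

section LowerBound

theorem exists_snoc_mem_of_isFeedbackVertexSet {Y : Finset (Vertex 3 n)}
    (hY : IsFeedbackVertexSet (sierpinskiTriangle 3 n) ↑Y) (s : Fin n → Fin 3) :
    ∃ a, vertex (Fin.snoc s a) ∈ Y := by
  classical
  by_contra! h
  have hadj (a b : Fin 3) (hab : a ≠ b) :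
      ((sierpinskiTriangle 3 n).induce (↑Y)ᶜ).Adj ⟨_, h a⟩ ⟨_, h b⟩ :=
    adj_iff.2 ⟨s, a, b, hab, rfl, rfl⟩
  exact hY.cliqueFree le_rfl {⟨_, h 0⟩, ⟨_, h 1⟩, ⟨_, h 2⟩}
    (is3Clique_triple_iff.2 ⟨hadj 0 1 (by decide), hadj 0 2 (by decide), hadj 1 2 (by decide)⟩)

theorem card_filter_vertex_snoc_eq_le_two [DecidableEq (Vertex p n)]
    (g : (Fin n → Fin p) → Fin p) (x : Vertex p n) :
    (Finset.univ.filter fun s => vertex (Fin.snoc s (g s)) = x).card ≤ 2 := by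
  obtain ⟨w, w', hw⟩ := exists_pair_of_vertex_eq x
  calc _ ≤ ({w, w'} : Finset _).card :=
        Finset.card_le_card_of_injOn (fun s => Fin.snoc s (g s))
          (fun s hs => by simpa using hw _ (Finset.mem_filter.1 hs).2)
          (fun s _ s' _ h => by simpa using congrArg Fin.init h)
    _ ≤ 2 := Finset.card_le_two

theorem three_pow_le_two_mul_card {Y : Finset (Vertex 3 n)}
    (hY : IsFeedbackVertexSet (sierpinskiTriangle 3 n) ↑Y) : 3 ^ n ≤ 2 * Y.card := by
  classical
  choose g hg using exists_snoc_mem_of_isFeedbackVertexSet hY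
  calc 3 ^ n = (Finset.univ : Finset (Fin n → Fin 3)).card := by simp
    _ ≤ 2 * Y.card := Finset.card_le_mul_card_image_of_maps_to (fun s _ => hg s) 2
        fun x _ => card_filter_vertex_snoc_eq_le_two g x

end LowerBound

section Glue

noncomputable def glue (X : Fin p → Finset (Vertex p n)) : Finset (Vertex p (n + 1)) := by
  classical exact Finset.univ.biUnion fun i => (X i).map (copyEmbedding i).toEmbedding

variable {X : Fin p → Finset (Vertex p n)}

theorem mem_glue_iff {z : Vertex p (n + 1)} :
    z ∈ glue X ↔ ∃ i, ∃ y ∈ X i, copy i y = z := by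
  simp [glue, copyEmbedding]

/-- `hX` says that the pieces in copies `i` and `j` agree at the vertex the copies share,
`copy i (extreme n j) = copy j (extreme n i)`. -/
theorem copy_mem_glue_iff (hX : ∀ i j, extreme n j ∈ X i ↔ extreme n i ∈ X j) {i : Fin p}
    {y : Vertex p n} : copy i y ∈ glue X ↔ y ∈ X i := by
  refine mem_glue_iff.trans ⟨?_, fun hy => ⟨i, y, hy, rfl⟩⟩
  rintro ⟨j, y', hy', h⟩
  by_cases hji : j = i
  · subst hji
    rwa [← copy_injective j h]
  · obtain ⟨rfl, rfl⟩ := copy_eq_copy hji h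
    exact (hX i j).2 hy'

theorem extreme_mem_glue_iff (hX : ∀ i j, extreme n j ∈ X i ↔ extreme n i ∈ X j)
    (k : Fin p) : extreme (n + 1) k ∈ glue X ↔ extreme n k ∈ X k := by
  rw [← copy_extreme, copy_mem_glue_iff hX]

theorem fin_three_cases (l : Fin 3) : l = 0 ∨ l = 1 ∨ l = 2 := by
  fin_cases l <;> simp

/-- The copies meet pairwise in cut vertices; once the junction of copies `1` and `2` is
removed, a cycle cannot pass through two copies. -/
theorem isAcyclic_induce_of_copies {S : Set (Vertex 3 (n + 1))}
    (hmid : copy 1 (extreme n 2) ∉ S)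
    (h : ∀ i, ((sierpinskiTriangle 3 (n + 1)).induce (S ∩ Set.range (copy i))).IsAcyclic) :
    ((sierpinskiTriangle 3 (n + 1)).induce S).IsAcyclic := by
  set C := fun i => S ∩ Set.range (copy (n := n) i)
  have hmeet {i j : Fin 3} (hij : i ≠ j) {z} (hi : z ∈ Set.range (copy i))
      (hj : z ∈ Set.range (copy j)) : z = copy i (extreme n j) := by
    obtain ⟨x, rfl⟩ := hi
    obtain ⟨y, hy⟩ := hj
    rw [(copy_eq_copy hij hy.symm).1]
  have hedge {a b} (hab : (sierpinskiTriangle 3 (n + 1)).Adj a b) :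
      ∃ l, a ∈ Set.range (copy l) ∧ b ∈ Set.range (copy l) := by
    obtain ⟨l, x, y, -, rfl, rfl⟩ := exists_copy_of_adj hab
    exact ⟨l, ⟨x, rfl⟩, ⟨y, rfl⟩⟩
  have h01 : ((sierpinskiTriangle 3 (n + 1)).induce (C 0 ∪ C 1)).IsAcyclic := by
    refine isAcyclic_induce_union (fun z hz => hmeet (by decide) hz.1.2 hz.2.2) ?_ (h 0) (h 1)
    rintro a ⟨⟨haS, ha0⟩, ha1⟩ b ⟨⟨hbS, hb1⟩, hb0⟩ hab
    obtain ⟨l, hal, hbl⟩ := hedge hab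
    rcases fin_three_cases l with rfl | rfl | rfl
    · exact hb0 ⟨hbS, hbl⟩
    · exact ha1 ⟨haS, hal⟩
    · exact hmid (hmeet (by decide) hb1 hbl ▸ hbS)
  have hS : S = (C 0 ∪ C 1) ∪ C 2 := by
    ext z
    obtain ⟨i, y, rfl⟩ := exists_copy_eq z
    refine ⟨fun hz => ?_, fun hz => by rcases hz with (hz | hz) | hz <;> exact hz.1⟩
    rcases fin_three_cases i with rfl | rfl | rfl
    exacts [Or.inl (Or.inl ⟨hz, y, rfl⟩), Or.inl (Or.inr ⟨hz, y, rfl⟩),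
      Or.inr ⟨hz, y, rfl⟩]
  rw [hS]
  refine isAcyclic_induce_union (v := copy 0 (extreme n 2)) ?_ ?_ h01 (h 2)
  · rintro z ⟨hz0 | hz1, hz2⟩
    · exact hmeet (by decide) hz0.2 hz2.2
    · exact absurd (hmeet (by decide) hz1.2 hz2.2 ▸ hz1.1) hmid
  · rintro a ⟨ha01, ha2⟩ b ⟨⟨hbS, hb2⟩, hb01⟩ hab
    obtain ⟨l, hal, hbl⟩ := hedge hab
    rcases fin_three_cases l with rfl | rfl | rfl
    · exact hb01 (Or.inl ⟨hbS, hbl⟩)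
    · exact hb01 (Or.inr ⟨hbS, hbl⟩)
    · exact ha2 ⟨ha01.elim (·.1) (·.1), hal⟩

theorem isFeedbackVertexSet_glue {X : Fin 3 → Finset (Vertex 3 n)}
    (hX : ∀ i j, extreme n j ∈ X i ↔ extreme n i ∈ X j)
    (hfvs : ∀ i, IsFeedbackVertexSet (sierpinskiTriangle 3 n) ↑(X i))
    (h₁₂ : extreme n 2 ∈ X 1) :
    IsFeedbackVertexSet (sierpinskiTriangle 3 (n + 1)) ↑(glue X) := by
  refine isAcyclic_induce_of_copies (by simpa [copy_mem_glue_iff hX] using h₁₂) fun i => ?_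
  have hpart : (↑(glue X))ᶜ ∩ Set.range (copy i) = copy i '' (X i : Set (Vertex 3 n))ᶜ := by
    ext z
    constructor
    · rintro ⟨hz, y, rfl⟩
      exact ⟨y, fun hy => hz ((copy_mem_glue_iff hX).2 hy), rfl⟩
    · rintro ⟨y, hy, rfl⟩
      exact ⟨fun hz => hy ((copy_mem_glue_iff hX).1 hz), y, rfl⟩
  rw [hpart]
  exact ((copyEmbedding i).induceImage _).isAcyclic_iff.1 (hfvs i)

theorem card_glue_add_one_le {X : Fin 3 → Finset (Vertex 3 n)} (h₁ : extreme n 2 ∈ X 1)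
    (h₂ : extreme n 1 ∈ X 2) : (glue X).card + 1 ≤ (X 0).card + (X 1).card + (X 2).card := by
  classical
  set A := fun i => (X i).map (copyEmbedding (n := n) i).toEmbedding
  have hsub : glue X ⊆ A 0 ∪ (A 1 ∪ A 2) := by
    intro z hz
    obtain ⟨i, y, hy, rfl⟩ := mem_glue_iff.1 hz
    have hA := Finset.mem_map_of_mem (copyEmbedding i).toEmbedding hy
    rcases fin_three_cases i with rfl | rfl | rfl
    exacts [Finset.mem_union_left _ hA, Finset.mem_union_right _ (Finset.mem_union_left _ hA),
      Finset.mem_union_right _ (Finset.mem_union_right _ hA)]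
  have hmid : copy 1 (extreme n 2) ∈ A 1 ∩ A 2 := by
    refine Finset.mem_inter.2 ⟨Finset.mem_map_of_mem _ h₁, ?_⟩
    rw [copy_comm (by decide)]
    exact Finset.mem_map_of_mem _ h₂
  have h₁₂ : (A 1 ∪ A 2).card + 1 ≤ (A 1).card + (A 2).card := by
    rw [← Finset.card_union_add_card_inter]
    exact Nat.add_le_add_left (Finset.card_pos.2 ⟨_, hmid⟩) _
  have hglue := (Finset.card_le_card hsub).trans (Finset.card_union_le _ _)
  simp only [A, Finset.card_map] at hglue h₁₂
  omega

end Glue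

section Induction

/-- `(3 ^ n + 1) / 2 = ⌈3^n / 2⌉` is the lower bound of `three_pow_le_two_mul_card`. -/
def IsTightFVS (n : ℕ) (k : Fin 3) (X : Finset (Vertex 3 n)) : Prop :=
  IsFeedbackVertexSet (sierpinskiTriangle 3 n) ↑X ∧ X.card ≤ (3 ^ n + 1) / 2 ∧
    ∀ j, extreme n j ∈ X ↔ j = k

theorem IsTightFVS.relabel {k : Fin 3} {X : Finset (Vertex 3 n)} (h : IsTightFVS n k X)
    (σ : Equiv.Perm (Fin 3)) :
    IsTightFVS n (σ k) (X.map (relabelIso σ).toEquiv.toEmbedding) := by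
  obtain ⟨hfvs, hcard, hext⟩ := h
  refine ⟨?_, by rwa [Finset.card_map], fun j => ?_⟩
  · rw [Finset.coe_map]
    exact hfvs.image_iso (relabelIso σ)
  · rw [Finset.mem_map_equiv]
    exact (hext (σ⁻¹ j)).trans Equiv.Perm.inv_eq_iff_eq

theorem exists_isTightFVS_of_zero (h : ∃ X, IsTightFVS n 0 X) (k : Fin 3) :
    ∃ X, IsTightFVS n k X := by
  obtain ⟨X, hX⟩ := h
  simpa using ⟨_, hX.relabel (Equiv.swap 0 k)⟩

theorem exists_isTightFVS_zero : ∃ X, IsTightFVS 0 0 X := by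
  have hsub : (↑({extreme 0 0} : Finset (Vertex 3 0)) : Set (Vertex 3 0))ᶜ ⊆
      {extreme 0 1, extreme 0 2} := by
    intro x hx
    obtain ⟨k, rfl⟩ := exists_extreme_eq x
    rcases fin_three_cases k with rfl | rfl | rfl
    · simp at hx
    · simp
    · simp
  refine ⟨{extreme 0 0}, IsAcyclic.of_card_le_two ?_, by simp,
    fun j => by simp [extreme_injective.eq_iff]⟩
  exact (Set.encard_le_encard hsub).trans (Set.encard_pair (extreme_injective.ne (by decide))).le

theorem exists_isTightFVS_succ (h : ∀ k, ∃ X, IsTightFVS n k X) :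
    ∃ X, IsTightFVS (n + 1) 0 X := by
  choose Y hY using h
  -- Copy `i` receives a tight set with extreme vertex `e i`. As `e` is an involution fixing
  -- only `0`, the pieces agree at the junctions and only `copy 1 (extreme n 2)` is shared.
  let e : Fin 3 → Fin 3 := ![0, 2, 1]
  have hext (i j : Fin 3) : extreme n j ∈ Y (e i) ↔ j = e i := (hY (e i)).2.2 j
  have hX (i j : Fin 3) : extreme n j ∈ Y (e i) ↔ extreme n i ∈ Y (e j) := by
    rw [hext, hext]
    revert i j
    decide
  refine ⟨glue fun i => Y (e i), isFeedbackVertexSet_glue hX (fun i => (hY _).1)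
    ((hext 1 2).2 rfl), ?_, fun j => ?_⟩
  · have hcard := card_glue_add_one_le (X := fun i => Y (e i))
      ((hext 1 2).2 rfl) ((hext 2 1).2 rfl)
    have h₀ := (hY (e 0)).2.1
    have h₁ := (hY (e 1)).2.1
    have h₂ := (hY (e 2)).2.1
    rw [pow_succ]
    omega
  · rw [extreme_mem_glue_iff hX, hext]
    revert j
    decide

theorem exists_isTightFVS : ∀ n, ∃ X, IsTightFVS n 0 X
  | 0 => exists_isTightFVS_zero
  | n + 1 => exists_isTightFVS_succ (exists_isTightFVS_of_zero (exists_isTightFVS n))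

end Induction

end SierpinskiTriangle

theorem stmt12 (n : Nat) :
    ∃ X : Finset (Quotient (triSetoid 3 n)),
      IsFeedbackVertexSet (sierpinskiTriangle 3 n) ↑X ∧
      X.card = feedbackNumber (sierpinskiTriangle 3 n) ∧
      ∃ k : Fin 3,
        (↑X : Set (Quotient (triSetoid 3 n))) ∩
          Set.range (fun i : Fin 3 => Quotient.mk (triSetoid 3 n) (fun _ => i)) =
        {Quotient.mk (triSetoid 3 n) (fun _ => k)} := by
  obtain ⟨X, hfvs, hcard, hext⟩ := SierpinskiTriangle.exists_isTightFVS n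
  refine ⟨X, hfvs, hfvs.card_eq_feedbackNumber fun Y hY => ?_, 0,
    SierpinskiTriangle.inter_range_extreme_eq hext⟩
  have := SierpinskiTriangle.three_pow_le_two_mul_card hY
  omega
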